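/- Let m ≥ 1 and let H_m ≤ GL(2m,2) be the group of matrices [[A, AS],[0, (Aᵀ)⁻¹]] with A invertible and S symmetric with zero diagonal. Then the orbits of H_m on 𝔽₂^{2m} are exactly: {0}, S_m \ {0}, Q_m \ S_m, and 𝔽₂^{2m} \ Q_m. -/

import Mathlib

open Matrix

/-- Membership in the group `H_m` of matrices `[[A, AS],[0,(Aᵀ)⁻¹]]` with `A`
invertible and `S` symmetric with zero diagonal. -/
def InH (m : ℕ) (M : Matrix (Fin m ⊕ Fin m) (Fin m ⊕ Fin m) (ZMod 2)) : Prop :=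
  ∃ A S : Matrix (Fin m) (Fin m) (ZMod 2),
    IsUnit A ∧ S.IsSymm ∧ (∀ i, S i i = 0) ∧
    M = Matrix.fromBlocks A (A * S) 0 Aᵀ⁻¹

/-- Two vectors of `𝔽₂^{2m}` lie in the same of the four classes
`{0}`, `S_m \ {0}`, `Q_m \ S_m`, `𝔽₂^{2m} \ Q_m`. -/
def SameClass (m : ℕ) (v w : Fin m ⊕ Fin m → ZMod 2) : Prop :=
  (v = 0 ∧ w = 0) ∨
  (((∀ i, v (Sum.inr i) = 0) ∧ v ≠ 0) ∧ ((∀ i, w (Sum.inr i) = 0) ∧ w ≠ 0)) ∨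
  (((fun i => v (Sum.inl i)) ⬝ᵥ (fun i => v (Sum.inr i)) = 0 ∧
      ¬(∀ i, v (Sum.inr i) = 0)) ∧
   ((fun i => w (Sum.inl i)) ⬝ᵥ (fun i => w (Sum.inr i)) = 0 ∧
      ¬(∀ i, w (Sum.inr i) = 0))) ∨
  ((fun i => v (Sum.inl i)) ⬝ᵥ (fun i => v (Sum.inr i)) ≠ 0 ∧
   (fun i => w (Sum.inl i)) ⬝ᵥ (fun i => w (Sum.inr i)) ≠ 0)

/-!
The matrix `[[A, AS],[0,(Aᵀ)⁻¹]]` sends `(x, y)` to `(A (x + S y), (Aᵀ)⁻¹ y)`. It preserves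
whether `(x, y)` and `y` vanish, and it preserves `x ⬝ᵥ y` because `y ⬝ᵥ S y = 0` for a symmetric
`S` with zero diagonal in characteristic two; over `𝔽₂` these invariants determine the class.
Conversely, given `(x, y)` and `(x', y')` with the same invariants, pick an invertible `A` with
`(Aᵀ)⁻¹ y = y'` (or `A x = x'` when `y = y' = 0`); it remains to solve `S y = A⁻¹ x' - x`, whose
right-hand side is orthogonal to `y`, and `S = c uᵀ + u cᵀ` with `u ⬝ᵥ y = 1` solves it.
-/

namespace Matrix

variable {R K n : Type*} [Fintype n]

theorem dotProduct_mulVec_self_eq_zero [CommRing R] [CharP R 2] {S : Matrix n n R}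
    (hS : S.IsSymm) (hd : ∀ i, S i i = 0) (y : n → R) : y ⬝ᵥ S *ᵥ y = 0 := by
  have hsum : y ⬝ᵥ S *ᵥ y = ∑ p : n × n, y p.1 * S p.1 p.2 * y p.2 := by
    simp only [Fintype.sum_prod_type, dotProduct, mulVec, Finset.mul_sum, mul_assoc]
  rw [hsum]
  refine Finset.sum_ninvolution Prod.swap (fun p => ?_) (fun p hp => ?_)
    (fun _ => Finset.mem_univ _) Prod.swap_swap
  · rw [Prod.fst_swap, Prod.snd_swap, hS.apply p.1 p.2,
      show y p.2 * S p.1 p.2 * y p.1 = y p.1 * S p.1 p.2 * y p.2 by ring]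
    exact CharTwo.add_self_eq_zero (R := R) _
  · intro h
    obtain ⟨i, j⟩ := p
    obtain rfl : i = j := congrArg Prod.snd h
    simp [hd] at hp

theorem fromBlocks_mulVec_sumElim [CommRing R] (A S D : Matrix n n R) (x y : n → R) :
    fromBlocks A (A * S) 0 D *ᵥ Sum.elim x y = Sum.elim (A *ᵥ (x + S *ᵥ y)) (D *ᵥ y) := by
  simp [fromBlocks_mulVec, mulVec_add, mulVec_mulVec]

variable [DecidableEq n] [Field K]

theorem mulVec_transpose_inv_dotProduct {A : Matrix n n K} (hA : IsUnit A) (x y : n → K) :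
    A *ᵥ x ⬝ᵥ Aᵀ⁻¹ *ᵥ y = x ⬝ᵥ y := by
  rw [dotProduct_comm, dotProduct_mulVec, ← mulVec_transpose, mulVec_mulVec,
    mul_nonsing_inv _ (by rwa [det_transpose, ← isUnit_iff_isUnit_det]), one_mulVec,
    dotProduct_comm]

theorem mulVec_eq_zero_iff_of_isUnit {A : Matrix n n K} (hA : IsUnit A) {x : n → K} :
    A *ᵥ x = 0 ↔ x = 0 :=
  (mulVec_injective_iff_isUnit.mpr hA).eq_iff' (mulVec_zero A)

theorem exists_isUnit_mulVec_eq {x y : n → K} (h : x = 0 ↔ y = 0) :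
    ∃ A : Matrix n n K, IsUnit A ∧ A *ᵥ x = y := by
  by_cases hx : x = 0
  · exact ⟨1, isUnit_one, by rw [hx, h.mp hx, mulVec_zero]⟩
  have hy : y ≠ 0 := mt h.mpr hx
  obtain ⟨g, hg⟩ := Submodule.exists_linearEquiv_restrict_eq
    ((LinearEquiv.toSpanNonzeroSingleton K _ x hx).symm ≪≫ₗ
      LinearEquiv.toSpanNonzeroSingleton K _ y hy)
  refine ⟨LinearMap.toMatrix' g, LinearMap.isUnit_toMatrix'_iff.mpr
    ((Module.End.isUnit_iff _).mpr g.bijective), ?_⟩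
  rw [LinearMap.toMatrix'_mulVec, LinearEquiv.coe_coe,
    ← hg ⟨x, Submodule.mem_span_singleton_self x⟩, LinearEquiv.trans_apply,
    ← LinearEquiv.coord, LinearEquiv.coord_self, LinearEquiv.toSpanNonzeroSingleton_one]

variable [CharP K 2]

theorem exists_isSymm_diag_zero_mulVec_eq {y c : n → K} (hy : y ≠ 0) (hc : c ⬝ᵥ y = 0) :
    ∃ S : Matrix n n K, S.IsSymm ∧ (∀ i, S i i = 0) ∧ S *ᵥ y = c := by
  obtain ⟨i, hi⟩ := Function.ne_iff.mp hy
  set u : n → K := Pi.single i (y i)⁻¹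
  have hu : u ⬝ᵥ y = 1 := by simp [u, inv_mul_cancel₀ hi]
  refine ⟨vecMulVec c u + vecMulVec u c, ?_, fun j => ?_, ?_⟩
  · simp [IsSymm, transpose_vecMulVec, add_comm]
  · rw [add_apply, vecMulVec_apply, vecMulVec_apply, mul_comm (u j)]
    exact CharTwo.add_self_eq_zero _
  · simp [add_mulVec, vecMulVec_mulVec, hu, hc]

theorem blockAction_invariants {A S : Matrix n n K} (hA : IsUnit A) (hS : S.IsSymm)
    (hd : ∀ i, S i i = 0) (x y : n → K) :
    ((x = 0 ∧ y = 0) ↔ (A *ᵥ (x + S *ᵥ y) = 0 ∧ Aᵀ⁻¹ *ᵥ y = 0)) ∧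
      (y = 0 ↔ Aᵀ⁻¹ *ᵥ y = 0) ∧ x ⬝ᵥ y = A *ᵥ (x + S *ᵥ y) ⬝ᵥ Aᵀ⁻¹ *ᵥ y := by
  have hAT : IsUnit Aᵀ⁻¹ := isUnit_nonsing_inv_iff.mpr ((isUnit_transpose A).mpr hA)
  rw [mulVec_eq_zero_iff_of_isUnit hA, mulVec_eq_zero_iff_of_isUnit hAT,
    mulVec_transpose_inv_dotProduct hA, add_dotProduct, dotProduct_comm (S *ᵥ y),
    dotProduct_mulVec_self_eq_zero hS hd, add_zero]
  refine ⟨⟨?_, ?_⟩, Iff.rfl, rfl⟩ <;> rintro ⟨hx, rfl⟩ <;> simpa using hx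

theorem exists_blockAction_eq {x y x' y' : n → K} (h0 : (x = 0 ∧ y = 0) ↔ (x' = 0 ∧ y' = 0))
    (hy : y = 0 ↔ y' = 0) (hd : x ⬝ᵥ y = x' ⬝ᵥ y') :
    ∃ A S : Matrix n n K, IsUnit A ∧ S.IsSymm ∧ (∀ i, S i i = 0) ∧
      A *ᵥ (x + S *ᵥ y) = x' ∧ Aᵀ⁻¹ *ᵥ y = y' := by
  by_cases hy0 : y = 0
  · obtain rfl := hy0
    obtain rfl := hy.mp rfl
    obtain ⟨A, hA, hAx⟩ := exists_isUnit_mulVec_eq (by simpa using h0)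
    exact ⟨A, 0, hA, isSymm_zero, fun _ => rfl, by simpa using hAx, mulVec_zero _⟩
  obtain ⟨B, hB, hBy⟩ := exists_isUnit_mulVec_eq (iff_of_false (mt hy.mpr hy0) hy0)
  have hBdet : IsUnit B.det := (isUnit_iff_isUnit_det B).mp hB
  have hBTdet : IsUnit Bᵀ.det := by rwa [det_transpose]
  obtain ⟨S, hS, hSd, hSy⟩ := exists_isSymm_diag_zero_mulVec_eq hy0 (c := Bᵀ⁻¹ *ᵥ x' - x) (by
    rw [sub_dotProduct, ← hBy, dotProduct_comm, mulVec_transpose_inv_dotProduct hB,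
      dotProduct_comm, hBy, hd, sub_self])
  refine ⟨Bᵀ, S, (isUnit_transpose B).mpr hB, hS, hSd, ?_, ?_⟩
  · rw [hSy, add_sub_cancel, mulVec_mulVec, mul_nonsing_inv _ hBTdet, one_mulVec]
  · rw [transpose_transpose, ← hBy, mulVec_mulVec, nonsing_inv_mul _ hBdet, one_mulVec]

end Matrix

theorem sameClass_sumElim_iff {m : ℕ} {x y x' y' : Fin m → ZMod 2} :
    SameClass m (Sum.elim x y) (Sum.elim x' y') ↔
      ((x = 0 ∧ y = 0) ↔ (x' = 0 ∧ y' = 0)) ∧ (y = 0 ↔ y' = 0) ∧ x ⬝ᵥ y = x' ⬝ᵥ y' := by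
  have hzero {a b : Fin m → ZMod 2} : Sum.elim a b = 0 ↔ a = 0 ∧ b = 0 := by
    rw [← Sum.elim_zero_zero, Sum.elim_eq_iff]
  have hall {a : Fin m → ZMod 2} : (∀ i, a i = 0) ↔ a = 0 := funext_iff.symm
  have hdot : y = 0 → x ⬝ᵥ y = 0 := fun h => by rw [h, dotProduct_zero]
  have hdot' : y' = 0 → x' ⬝ᵥ y' = 0 := fun h => by rw [h, dotProduct_zero]
  have hunit : ∀ a b : ZMod 2, a ≠ 0 → b ≠ 0 → a = b := by decide
  simp only [SameClass, Sum.elim_inl, Sum.elim_inr, hall, ne_eq, hzero]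
  constructor
  · rintro (⟨h, h'⟩ | ⟨⟨hy, hv⟩, hy', hw⟩ | ⟨⟨hd, hy⟩, hd', hy'⟩ | ⟨hd, hd'⟩)
    · exact ⟨iff_of_true h h', iff_of_true h.2 h'.2, by rw [hdot h.2, hdot' h'.2]⟩
    · exact ⟨iff_of_false hv hw, iff_of_true hy hy', by rw [hdot hy, hdot' hy']⟩
    · exact ⟨iff_of_false (fun h => hy h.2) (fun h => hy' h.2), iff_of_false hy hy',
        hd.trans hd'.symm⟩
    · exact ⟨iff_of_false (fun h => hd (hdot h.2)) (fun h => hd' (hdot' h.2)),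
        iff_of_false (mt hdot hd) (mt hdot' hd'), hunit _ _ hd hd'⟩
  · rintro ⟨h0, hy, hd⟩
    by_cases hv : x = 0 ∧ y = 0
    · exact Or.inl ⟨hv, h0.mp hv⟩
    by_cases hy0 : y = 0
    · exact Or.inr (Or.inl ⟨⟨hy0, hv⟩, hy.mp hy0, mt h0.mpr hv⟩)
    by_cases hd0 : x ⬝ᵥ y = 0
    · exact Or.inr (Or.inr (Or.inl ⟨⟨hd0, hy0⟩, hd ▸ hd0, mt hy.mpr hy0⟩))
    · exact Or.inr (Or.inr (Or.inr ⟨hd0, hd ▸ hd0⟩))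

theorem stmt7_general (m : ℕ) (v w : Fin m ⊕ Fin m → ZMod 2) :
    (∃ M, InH m M ∧ M.mulVec v = w) ↔ SameClass m v w := by
  obtain ⟨x, y, rfl⟩ : ∃ x y, v = Sum.elim x y := ⟨_, _, (Sum.elim_comp_inl_inr v).symm⟩
  obtain ⟨x', y', rfl⟩ : ∃ x y, w = Sum.elim x y := ⟨_, _, (Sum.elim_comp_inl_inr w).symm⟩
  rw [sameClass_sumElim_iff]
  constructor
  · rintro ⟨_, ⟨A, S, hA, hS, hd, rfl⟩, hvw⟩
    rw [fromBlocks_mulVec_sumElim, Sum.elim_eq_iff] at hvw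
    obtain ⟨rfl, rfl⟩ := hvw
    exact blockAction_invariants hA hS hd x y
  · rintro ⟨h0, hy, hd⟩
    obtain ⟨A, S, hA, hS, hSd, hx', hy'⟩ := exists_blockAction_eq h0 hy hd
    exact ⟨_, ⟨A, S, hA, hS, hSd, rfl⟩, by rw [fromBlocks_mulVec_sumElim, hx', hy']⟩

theorem stmt7 (m : ℕ) (hm : 1 ≤ m) (v w : Fin m ⊕ Fin m → ZMod 2) :
    (∃ M, InH m M ∧ M.mulVec v = w) ↔ SameClass m v w :=
  stmt7_general m v w
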